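/- Let Y be a pointed topological space, ε : Y → Y the constant map to the base point, π : Y ∨ Y → Y the pinch (fold) map, and ι : Y → Y ∨ Y the inclusion onto the second wedge summand. Define u : Y ∨ Y → Y ∨ Y as the composite u = ι ∘ π ∘ (1_Y ∨ ε). Then cat u = cat Y. -/

import Mathlib

/-!
The map `u` factors through `Y` as `u = ι ∘ r` with `r = π ∘ (1 ∨ ε)`, and conversely
`1_Y = π ∘ u ∘ ι₁` for the inclusion `ι₁` of the first summand. Pulling an `f`-categorical
cover back along `h` gives a `g ∘ f ∘ h`-categorical cover of the same size, so `u` and `1_Y`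
admit categorical covers of exactly the same sizes; the two infima then agree, even in the
junk case `sInf ∅ = 0` where no finite cover exists.
-/

open ContinuousMap Set

section LS

variable {X Y : Type*} [TopologicalSpace X] [TopologicalSpace Y]

/-- A set `A ⊆ X` is `f`-categorical if it is open and the restriction of `f`
to `A` is null-homotopic. -/
def IsCatSet (f : C(X, Y)) (A : Set X) : Prop :=
  IsOpen A ∧ ContinuousMap.Nullhomotopic (f.restrict A)

/-- The Lusternik–Schnirelmann category of a map `f : X → Y`: the minimal number `n`
such that `X` admits a covering by `n` `f`-categorical sets. -/
noncomputable def catMap (f : C(X, Y)) : ℕ :=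
  sInf {n : ℕ | ∃ A : Fin n → Set X, (∀ i, IsCatSet f (A i)) ∧ (⋃ i, A i) = Set.univ}

/-- The Lusternik–Schnirelmann category of a space: `cat X = cat (id X)`. -/
noncomputable def catSpace (X : Type*) [TopologicalSpace X] : ℕ :=
  catMap (ContinuousMap.id X)

/-- The `k`-fold iterate of a continuous self-map. -/
def cIter (f : C(X, X)) : ℕ → C(X, X)
  | 0 => ContinuousMap.id X
  | n + 1 => f.comp (cIter f n)

theorem cIter_basepoint (f : C(X, X)) {x₀ : X} (hf : f x₀ = x₀) :
    ∀ k, cIter f k x₀ = x₀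
  | 0 => rfl
  | k + 1 => by
      simp only [cIter, ContinuousMap.comp_apply, cIter_basepoint f hf k, hf]

end LS

section Wedge

variable (X A : Type*) [TopologicalSpace X] [TopologicalSpace A] (x₀ : X) (a₀ : A)

/-- The relation identifying the base points in the disjoint union. -/
inductive WedgeRel : X ⊕ A → X ⊕ A → Prop
  | base : WedgeRel (Sum.inl x₀) (Sum.inr a₀)

/-- The wedge (one-point union) of two pointed spaces. -/
def Wedge : Type _ := Quot (WedgeRel X A x₀ a₀)

instance : TopologicalSpace (Wedge X A x₀ a₀) :=
  inferInstanceAs (TopologicalSpace (Quot _))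

/-- Projection onto the wedge. -/
def Wedge.mk : X ⊕ A → Wedge X A x₀ a₀ := Quot.mk _

/-- The base point of the wedge. -/
def Wedge.pt : Wedge X A x₀ a₀ := Wedge.mk X A x₀ a₀ (Sum.inl x₀)

variable {X A x₀ a₀}
variable {Y B : Type*} [TopologicalSpace Y] [TopologicalSpace B] {y₀ : Y} {b₀ : B}

/-- The wedge `f ∨ g` of two pointed maps. -/
def wedgeMap (f : C(X, Y)) (g : C(A, B)) (hf : f x₀ = y₀) (hg : g a₀ = b₀) :
    C(Wedge X A x₀ a₀, Wedge Y B y₀ b₀) where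
  toFun := Quot.lift (fun p => Wedge.mk Y B y₀ b₀ (Sum.map f g p)) (by
    rintro _ _ ⟨⟩
    simp only [Sum.map_inl, Sum.map_inr, hf, hg]
    exact Quot.sound WedgeRel.base)
  continuous_toFun :=
    continuous_quot_lift _ ((continuous_quot_mk).comp (f.continuous.sumMap g.continuous))

@[simp] theorem wedgeMap_mk (f : C(X, Y)) (g : C(A, B)) (hf : f x₀ = y₀) (hg : g a₀ = b₀)
    (p : X ⊕ A) :
    wedgeMap f g hf hg (Wedge.mk X A x₀ a₀ p) = Wedge.mk Y B y₀ b₀ (Sum.map f g p) :=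
  rfl

/-- The pinch (fold) map `X ∨ X → X`, induced by the identity on each summand. -/
def pinch (X : Type*) [TopologicalSpace X] (x₀ : X) : C(Wedge X X x₀ x₀, X) where
  toFun := Quot.lift (Sum.elim id id) (by rintro _ _ ⟨⟩; rfl)
  continuous_toFun := continuous_quot_lift _ (continuous_id.sumElim continuous_id)

@[simp] theorem pinch_mk (X : Type*) [TopologicalSpace X] (x₀ : X) (p : X ⊕ X) :
    pinch X x₀ (Wedge.mk X X x₀ x₀ p) = Sum.elim id id p :=
  rfl

/-- The inclusion of `X` onto the second summand of `X ∨ X`. -/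
def inclRight (X : Type*) [TopologicalSpace X] (x₀ : X) : C(X, Wedge X X x₀ x₀) where
  toFun x := Wedge.mk X X x₀ x₀ (Sum.inr x)
  continuous_toFun := (continuous_quot_mk).comp continuous_inr

@[simp] theorem inclRight_apply (X : Type*) [TopologicalSpace X] (x₀ : X) (x : X) :
    inclRight X x₀ x = Wedge.mk X X x₀ x₀ (Sum.inr x) :=
  rfl

/-- The map `u = ι ∘ π ∘ (1 ∨ ε) : Y ∨ Y → Y ∨ Y` from the paper. -/
def uMap (Y : Type*) [TopologicalSpace Y] (y₀ : Y) : C(Wedge Y Y y₀ y₀, Wedge Y Y y₀ y₀) :=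
  (inclRight Y y₀).comp ((pinch Y y₀).comp
    (wedgeMap (ContinuousMap.id Y) (ContinuousMap.const Y y₀) rfl rfl))

/-- The map `v = ι ∘ π ∘ (1 ∨ f) : X ∨ X → X ∨ X` from the paper. -/
def vMap {X : Type*} [TopologicalSpace X] {x₀ : X} (f : C(X, X)) (hf : f x₀ = x₀) :
    C(Wedge X X x₀ x₀, Wedge X X x₀ x₀) :=
  (inclRight X x₀).comp ((pinch X x₀).comp (wedgeMap (ContinuousMap.id X) f rfl hf))

/-- `u` is a pointed map. -/
theorem uMap_pt (Y : Type*) [TopologicalSpace Y] (y₀ : Y) :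
    uMap Y y₀ (Wedge.pt Y Y y₀ y₀) = Wedge.pt Y Y y₀ y₀ := by
  simp only [uMap, Wedge.pt, ContinuousMap.comp_apply, wedgeMap_mk, Sum.map_inl,
    ContinuousMap.id_apply, pinch_mk, Sum.elim_inl, id_eq, inclRight_apply]
  exact (Quot.sound WedgeRel.base).symm

/-- `v` is a pointed map. -/
theorem vMap_pt {X : Type*} [TopologicalSpace X] {x₀ : X} (f : C(X, X)) (hf : f x₀ = x₀) :
    vMap f hf (Wedge.pt X X x₀ x₀) = Wedge.pt X X x₀ x₀ := by
  simp only [vMap, Wedge.pt, ContinuousMap.comp_apply, wedgeMap_mk, Sum.map_inl,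
    ContinuousMap.id_apply, pinch_mk, Sum.elim_inl, id_eq, inclRight_apply]
  exact (Quot.sound WedgeRel.base).symm

end Wedge

section Category

variable {W X Y Z : Type*} [TopologicalSpace W] [TopologicalSpace X] [TopologicalSpace Y]
  [TopologicalSpace Z]

def HasCatCover (f : C(X, Y)) (n : ℕ) : Prop :=
  ∃ A : Fin n → Set X, (∀ i, IsCatSet f (A i)) ∧ (⋃ i, A i) = univ

theorem catMap_eq_sInf_hasCatCover (f : C(X, Y)) : catMap f = sInf {n | HasCatCover f n} :=
  rfl

theorem IsCatSet.comp {f : C(X, Y)} {A : Set X} (hA : IsCatSet f A) (g : C(Y, Z))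
    (h : C(W, X)) : IsCatSet ((g.comp f).comp h) (h ⁻¹' A) :=
  ⟨hA.1.preimage h.continuous, (hA.2.comp_left (h.restrictPreimage A)).comp_right g⟩

theorem HasCatCover.comp {f : C(X, Y)} {n : ℕ} (hf : HasCatCover f n) (g : C(Y, Z))
    (h : C(W, X)) : HasCatCover ((g.comp f).comp h) n := by
  obtain ⟨A, hA, hcover⟩ := hf
  refine ⟨fun i => h ⁻¹' A i, fun i => (hA i).comp g h, ?_⟩
  rw [← preimage_iUnion, hcover, preimage_univ]

theorem catMap_eq_of_factors {f : C(X, Y)} {f' : C(W, Z)} {g : C(Y, Z)} {h : C(W, X)}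
    {g' : C(Z, Y)} {h' : C(X, W)} (hf' : (g.comp f).comp h = f')
    (hf : (g'.comp f').comp h' = f) : catMap f = catMap f' := by
  simp only [catMap_eq_sInf_hasCatCover]
  congr 1
  ext n
  exact ⟨fun H => hf' ▸ H.comp g h, fun H => hf ▸ H.comp g' h'⟩

end Category

section Wedge

variable {Y : Type*} [TopologicalSpace Y] (y₀ : Y)

def inclLeft : C(Y, Wedge Y Y y₀ y₀) where
  toFun y := Wedge.mk Y Y y₀ y₀ (Sum.inl y)
  continuous_toFun := continuous_quot_mk.comp continuous_inl

theorem pinch_comp_uMap_comp_inclLeft :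
    ((pinch Y y₀).comp (uMap Y y₀)).comp (inclLeft y₀) = ContinuousMap.id Y :=
  rfl

theorem uMap_eq_inclRight_comp_id_comp :
    uMap Y y₀ = ((inclRight Y y₀).comp (ContinuousMap.id Y)).comp
      ((pinch Y y₀).comp (wedgeMap (ContinuousMap.id Y) (ContinuousMap.const Y y₀) rfl rfl)) :=
  rfl

end Wedge

/-- for `u = ι ∘ π ∘ (1_Y ∨ ε) : Y ∨ Y → Y ∨ Y`, one has `cat u = cat Y`. -/
theorem catMap_uMap {Y : Type*} [TopologicalSpace Y] (y₀ : Y) :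
    catMap (uMap Y y₀) = catSpace Y :=
  (catMap_eq_of_factors (uMap_eq_inclRight_comp_id_comp y₀).symm
    (pinch_comp_uMap_comp_inclLeft y₀)).symm
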